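/- arXiv:1604.06518 — 3 statements merged into one kernel-verified Lean document; each statement's English description precedes it below -/
import Mathlib

section
/- Let 0 < λ ≤ 1 and y_max > 0. Define z₁ = 0 and z_{T+1} = λ⁻¹(y_max + (1/T) Σ_{t=1}^T z_t). Then the sequence (z_T) is unbounded; specifically, z_T ≥ y_max · Σ_{t=1}^{T-1} 1/t for all T ≥ 2, hence z_T ≥ y_max · log T → ∞. -/
open Finset Filter

/-- For 0 < λ ≤ 1 and y_max > 0, the recurrence z₁ = 0,
z_{T+1} = λ⁻¹(y_max + (1/T)Σ_{t=1}^T z_t) is unbounded: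
z_T ≥ y_max Σ_{t=1}^{T-1} 1/t ≥ y_max log T, hence z_T → ∞. -/
theorem sgd_l2_unbounded_when_lam_le_one
    (lam ymax : ℝ) (hlam0 : 0 < lam) (hlam1 : lam ≤ 1) (hy : 0 < ymax)
    (z : ℕ → ℝ) (hz1 : z 1 = 0)
    (hrec : ∀ T ≥ 1, z (T + 1) = lam⁻¹ * (ymax + (1 / (T : ℝ)) * ∑ t ∈ Icc 1 T, z t)) :
    (∀ T : ℕ, 2 ≤ T → ymax * ∑ t ∈ (Icc 1 (T - 1) : Finset ℕ), (1 : ℝ) / (t : ℝ) ≤ z T) ∧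
      (∀ T : ℕ, 2 ≤ T → ymax * Real.log T ≤ z T) ∧
      Tendsto z atTop atTop := by
  have hinv : 1 ≤ lam⁻¹ := by
    rw [le_inv_comm₀ one_pos hlam0]; simpa using hlam1
  -- nonnegativity of z t for t ≥ 1
  have hnn : ∀ t : ℕ, 1 ≤ t → 0 ≤ z t := by
    intro t
    induction t using Nat.strong_induction_on with
    | _ t ih =>
      intro ht
      rcases Nat.lt_or_ge t 2 with h | h
      · interval_cases t; simp [hz1]
      · obtain ⟨S, rfl⟩ : ∃ S, t = S + 1 := ⟨t - 1, by omega⟩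
        have hS : 1 ≤ S := by omega
        rw [hrec S hS]
        have hsum : 0 ≤ ∑ u ∈ Icc 1 S, z u :=
          Finset.sum_nonneg fun u hu => ih u (by have := Finset.mem_Icc.mp hu; omega)
            (Finset.mem_Icc.mp hu).1
        have hS0 : (0:ℝ) ≤ (S:ℝ) := Nat.cast_nonneg S
        have : (0:ℝ) ≤ ymax + (1 / (S:ℝ)) * ∑ u ∈ Icc 1 S, z u := by positivity
        have h0 : (0:ℝ) ≤ lam⁻¹ := by positivity
        exact mul_nonneg h0 this
  set H : ℕ → ℝ := fun n => ∑ t ∈ Icc 1 n, (1:ℝ)/(t:ℝ) with hH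
  -- key average bound
  have key : ∀ S : ℕ, 1 ≤ S → ymax * (H S - 1) ≤ (1 / (S:ℝ)) * ∑ t ∈ Icc 1 S, z t := by
    intro S
    induction S with
    | zero => omega
    | succ S ih =>
      intro _
      rcases Nat.eq_zero_or_pos S with rfl | hS
      · simp [hH, hz1]
      have hS1 : (0:ℝ) < (S:ℝ) + 1 := by positivity
      have hS0 : (0:ℝ) < (S:ℝ) := by exact_mod_cast hS
      have ihS := ih hS
      set a : ℝ := (1 / (S:ℝ)) * ∑ t ∈ Icc 1 S, z t with ha
      have ha0 : 0 ≤ a := by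
        have hsum : 0 ≤ ∑ u ∈ Icc 1 S, z u :=
          Finset.sum_nonneg fun u hu => hnn u (Finset.mem_Icc.mp hu).1
        positivity
      have hsum_eq : ∑ t ∈ Icc 1 S, z t = (S:ℝ) * a := by
        rw [ha]; field_simp
      have hzS : ymax + a ≤ z (S + 1) := by
        rw [hrec S hS]
        have h1 : 0 ≤ ymax + a := by positivity
        nlinarith [hinv]
      have hsum_succ : ∑ t ∈ Icc 1 (S + 1), z t = (S:ℝ) * a + z (S + 1) := by
        rw [Finset.sum_Icc_succ_top (by omega : 1 ≤ S + 1), hsum_eq]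
      have hHsucc : H (S + 1) = H S + 1 / ((S:ℝ) + 1) := by
        simp only [hH]
        rw [Finset.sum_Icc_succ_top (by omega : 1 ≤ S + 1)]
        push_cast; ring
      rw [hsum_succ, hHsucc]
      push_cast
      rw [show (1 / ((S:ℝ) + 1)) * ((S:ℝ) * a + z (S + 1))
          = ((S:ℝ) * a + z (S + 1)) / ((S:ℝ) + 1) from by ring, le_div_iff₀ hS1]
      have h3 := mul_le_mul_of_nonneg_left ihS hS1.le
      have e : ((S:ℝ) + 1) * (1 / ((S:ℝ) + 1)) = 1 := mul_one_div_cancel hS1.ne'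
      nlinarith [h3, hzS, e]
  -- part 1
  have part1 : ∀ T : ℕ, 2 ≤ T → ymax * ∑ t ∈ (Icc 1 (T - 1) : Finset ℕ), (1:ℝ)/(t:ℝ) ≤ z T := by
    intro T hT
    obtain ⟨S, rfl⟩ : ∃ S, T = S + 1 := ⟨T - 1, by omega⟩
    have hS : 1 ≤ S := by omega
    have hkey := key S hS
    have ha0 : 0 ≤ (1 / (S:ℝ)) * ∑ t ∈ Icc 1 S, z t := by
      have hsum : 0 ≤ ∑ u ∈ Icc 1 S, z u :=
        Finset.sum_nonneg fun u hu => hnn u (Finset.mem_Icc.mp hu).1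
      positivity
    have hzS : ymax + (1 / (S:ℝ)) * ∑ t ∈ Icc 1 S, z t ≤ z (S + 1) := by
      rw [hrec S hS]
      nlinarith [hinv]
    have : S + 1 - 1 = S := by omega
    rw [this]
    calc ymax * ∑ t ∈ Icc 1 S, (1:ℝ)/(t:ℝ) = ymax * (H S - 1) + ymax := by rw [hH]; ring
    _ ≤ (1 / (S:ℝ)) * ∑ t ∈ Icc 1 S, z t + ymax := by linarith
    _ ≤ z (S + 1) := by linarith
  -- part 2
  have part2 : ∀ T : ℕ, 2 ≤ T → ymax * Real.log T ≤ z T := by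
    intro T hT
    refine le_trans ?_ (part1 T hT)
    have hlog := log_add_one_le_harmonic (T - 1)
    have hcast : ((harmonic (T - 1) : ℚ) : ℝ) = ∑ t ∈ Icc 1 (T - 1), (1:ℝ)/(t:ℝ) := by
      rw [harmonic_eq_sum_Icc]
      push_cast
      simp [one_div]
    have hT1 : (T - 1 : ℕ) + 1 = T := by omega
    rw [hT1] at hlog
    rw [hcast] at hlog
    exact mul_le_mul_of_nonneg_left hlog hy.le
  refine ⟨part1, part2, ?_⟩
  have hlim : Tendsto (fun T : ℕ => ymax * Real.log T) atTop atTop := by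
    exact (Real.tendsto_log_atTop.comp tendsto_natCast_atTop_atTop).const_mul_atTop hy
  exact tendsto_atTop_mono' atTop (eventually_atTop.2 ⟨2, part2⟩) hlim
end

section
/- Let s₁ = 0 and s_{T+1} = λ⁻¹(1 + (1/T) Σ_{t=1}^T s_t) with 0 < λ ≤ 1. Then for all T ≥ 2, s_T ≥ Σ_{t=1}^{T-1} 1/t. The inductive step uses the identity Σ_{t=1}^{T} Σ_{n=1}^{t-1} (1/n) = Σ_{t=1}^{T-1} (T - t)/t. -/
open Finset

-- difference of top term
private lemma aux_top (n : ℕ) (hn : 1 ≤ n) :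
    ∑ t ∈ Icc 1 n, ((n : ℝ) - t) / t = ∑ t ∈ Icc 1 (n - 1), ((n : ℝ) - t) / t := by
  obtain ⟨m, rfl⟩ : ∃ m, n = m + 1 := ⟨n - 1, by omega⟩
  rw [Finset.sum_Icc_succ_top (by omega)]
  simp

private lemma aux_ident (T : ℕ) (hT : 1 ≤ T) :
    ∑ t ∈ (Icc 1 T : Finset ℕ), ∑ n ∈ (Icc 1 (t - 1) : Finset ℕ), (1 : ℝ) / (n : ℝ)
      = ∑ t ∈ (Icc 1 (T - 1) : Finset ℕ), ((T : ℝ) - (t : ℝ)) / (t : ℝ) := by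
  induction T, hT using Nat.le_induction with
  | base => simp
  | succ n hn ih =>
    rw [Finset.sum_Icc_succ_top (by omega), ih]
    simp only [Nat.add_sub_cancel]
    rw [← aux_top n hn]
    rw [← Finset.sum_add_distrib]
    apply Finset.sum_congr rfl
    intro t ht
    simp only [Finset.mem_Icc] at ht
    have ht0 : (t : ℝ) ≠ 0 := Nat.cast_ne_zero.mpr (by omega)
    push_cast
    field_simp
    ring

private lemma aux_mul (T : ℕ) (hT : 1 ≤ T) :
    (T : ℝ) + ∑ t ∈ Icc 1 (T - 1), ((T : ℝ) - t) / t
      = (T : ℝ) * ∑ t ∈ Icc 1 T, (1 : ℝ) / t := by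
  rw [← aux_top T hT]
  rw [Finset.mul_sum]
  have h1 : ∀ t ∈ Icc 1 T, ((T : ℝ) - t) / t = (T : ℝ) * (1 / t) - 1 := by
    intro t ht
    simp only [Finset.mem_Icc] at ht
    have ht0 : (t : ℝ) ≠ 0 := Nat.cast_ne_zero.mpr (by omega)
    field_simp
  rw [Finset.sum_congr rfl h1, Finset.sum_sub_distrib]
  simp only [Finset.sum_const, Nat.card_Icc, nsmul_eq_mul, mul_one]
  have h2 : (T + 1 - 1 : ℕ) = T := by omega
  rw [h2]; ring

/-- For s₁ = 0, s_{T+1} = λ⁻¹(1 + (1/T)Σ_{t=1}^T s_t) with 0 < λ ≤ 1, one has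
s_T ≥ Σ_{t=1}^{T-1} 1/t for T ≥ 2; and the double-sum identity
Σ_{t=1}^{T} Σ_{n=1}^{t-1} 1/n = Σ_{t=1}^{T-1} (T-t)/t. -/
theorem harmonic_lower_bound_recurrence
    (lam : ℝ) (hlam0 : 0 < lam) (hlam1 : lam ≤ 1)
    (s : ℕ → ℝ) (hs1 : s 1 = 0)
    (hrec : ∀ T ≥ 1, s (T + 1) = lam⁻¹ * (1 + (1 / (T : ℝ)) * ∑ t ∈ Icc 1 T, s t)) :
    (∀ T : ℕ, 2 ≤ T → ∑ t ∈ (Icc 1 (T - 1) : Finset ℕ), (1 : ℝ) / (t : ℝ) ≤ s T) ∧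
      (∀ T : ℕ, 1 ≤ T →
        ∑ t ∈ (Icc 1 T : Finset ℕ), ∑ n ∈ (Icc 1 (t - 1) : Finset ℕ), (1 : ℝ) / (n : ℝ)
          = ∑ t ∈ (Icc 1 (T - 1) : Finset ℕ), ((T : ℝ) - (t : ℝ)) / (t : ℝ)) := by
  have hlaminv : (1 : ℝ) ≤ lam⁻¹ := one_le_inv_iff₀.mpr ⟨hlam0, hlam1⟩
  -- strengthened induction: H t ≤ s t for all 1 ≤ t ≤ T
  have main : ∀ T : ℕ, ∀ t : ℕ, 1 ≤ t → t ≤ T →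
      ∑ n ∈ (Icc 1 (t - 1) : Finset ℕ), (1 : ℝ) / (n : ℝ) ≤ s t := by
    intro T
    induction T with
    | zero => intro t h1 h2; omega
    | succ T ih =>
      intro t h1 h2
      rcases Nat.lt_or_ge t (T + 1) with h | h
      · exact ih t h1 (by omega)
      · have ht : t = T + 1 := by omega
        subst ht
        rcases Nat.eq_zero_or_pos T with rfl | hT0
        · simp [hs1]
        -- t = T+1, T ≥ 1
        rw [hrec T hT0]
        have hTpos : (0 : ℝ) < T := by positivity
        have hSsum : ∑ t ∈ Icc 1 (T - 1), ((T : ℝ) - t) / t ≤ ∑ t ∈ Icc 1 T, s t := by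
          rw [← aux_ident T hT0]
          apply Finset.sum_le_sum
          intro t ht
          simp only [Finset.mem_Icc] at ht
          exact ih t ht.1 ht.2
        have hH : ∑ n ∈ (Icc 1 (T + 1 - 1) : Finset ℕ), (1 : ℝ) / n
            = (1 / (T : ℝ)) * ((T : ℝ) + ∑ t ∈ Icc 1 (T - 1), ((T : ℝ) - t) / t) := by
          rw [aux_mul T hT0]
          simp only [Nat.add_sub_cancel]
          field_simp
        have hX : ∑ n ∈ (Icc 1 (T + 1 - 1) : Finset ℕ), (1 : ℝ) / n
            ≤ 1 + (1 / (T : ℝ)) * ∑ t ∈ Icc 1 T, s t := by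
          rw [hH, mul_add]
          have hTT : (1 / (T : ℝ)) * T = 1 := by field_simp
          have := mul_le_mul_of_nonneg_left hSsum (le_of_lt (by positivity : (0:ℝ) < 1 / T))
          linarith
        have hXnn : (0 : ℝ) ≤ 1 + (1 / (T : ℝ)) * ∑ t ∈ Icc 1 T, s t := by
          refine le_trans ?_ hX
          apply Finset.sum_nonneg
          intro n hn
          simp only [Finset.mem_Icc] at hn
          positivity
        calc ∑ n ∈ (Icc 1 (T + 1 - 1) : Finset ℕ), (1 : ℝ) / n
            ≤ 1 + (1 / (T : ℝ)) * ∑ t ∈ Icc 1 T, s t := hX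
          _ ≤ lam⁻¹ * (1 + (1 / (T : ℝ)) * ∑ t ∈ Icc 1 T, s t) := by
              nlinarith
  exact ⟨fun T hT => main T T (by omega) le_rfl, fun T hT => aux_ident T hT⟩
end

section
/- Suppose nonnegative reals A, B, λ, δ_Φ are given with λ > 0, and define P = ((δ_Φ+1)A + √((δ_Φ+1)²A² + 4Bλ(δ_Φ+1)))² / (4λ²). Then u = √P is the positive root of u² - (δ_Φ+1)Au/λ - (δ_Φ+1)B/λ = 0, and consequently for any sequence (vₜ) of nonnegative reals with v₁ = 0 and t·v_{t+1} ≤ (t-1)vₜ + (δ_Φ+1)(A√vₜ + B)/λ, one has vₜ ≤ P for all t. -/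
/-!
By the quadratic formula u = √P is the positive root of λu² = (δ_Φ+1)(A u + B), so P is a
fixed point of the monotone map f x = (δ_Φ+1)(A√x + B)/λ. The recursion bounds v_{t+1} by the
weighted average ((t-1)v_t + f(v_t))/t, so v_t ≤ P propagates by induction: the average of
v_t ≤ P and f(v_t) ≤ f(P) = P is again at most P.
-/

open Real

theorem add_sqrt_sq_add_nonneg (a : ℝ) {c : ℝ} (hc : 0 ≤ c) : 0 ≤ a + √(a ^ 2 + c) := by
  have : |a| ≤ √(a ^ 2 + c) := Real.abs_le_sqrt (by linarith)
  linarith [neg_abs_le a]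

theorem le_of_le_average_step {f : ℝ → ℝ} (hf : Monotone f) {P : ℝ} (hP : f P ≤ P)
    {v : ℕ → ℝ} (hv1 : v 1 ≤ P)
    (hrec : ∀ t : ℕ, 1 ≤ t → (t : ℝ) * v (t + 1) ≤ ((t : ℝ) - 1) * v t + f (v t)) :
    ∀ t : ℕ, 1 ≤ t → v t ≤ P := by
  intro t ht
  induction t, ht using Nat.le_induction with
  | base => exact hv1
  | succ t ht ih =>
    have ht' : (1 : ℝ) ≤ t := by exact_mod_cast ht
    have hstep : (t : ℝ) * v (t + 1) ≤ t * P :=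
      calc (t : ℝ) * v (t + 1) ≤ ((t : ℝ) - 1) * v t + f (v t) := hrec t ht
        _ ≤ ((t : ℝ) - 1) * P + P :=
          add_le_add (mul_le_mul_of_nonneg_left ih (by linarith)) ((hf ih).trans hP)
        _ = t * P := by ring
    exact le_of_mul_le_mul_left hstep (by linarith)

/-- The fixed point P of the AVM norm recursion: u = √P is the positive root of
u² - (δ_Φ+1)Au/λ - (δ_Φ+1)B/λ = 0, and every nonnegative sequence satisfying the
recursive bound t·v_{t+1} ≤ (t-1)vₜ + (δ_Φ+1)(A√vₜ + B)/λ with v₁ = 0 stays below P. -/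
theorem avm_norm_recursion_bound
    (A B lam δΦ : ℝ) (hA : 0 ≤ A) (hB : 0 ≤ B) (hδ : 0 ≤ δΦ) (hlam : 0 < lam) :
    let P := ((δΦ + 1) * A + Real.sqrt ((δΦ + 1) ^ 2 * A ^ 2 + 4 * B * lam * (δΦ + 1))) ^ 2
      / (4 * lam ^ 2)
    (Real.sqrt P ^ 2 - (δΦ + 1) * A * Real.sqrt P / lam - (δΦ + 1) * B / lam = 0) ∧
      ∀ v : ℕ → ℝ, (∀ t, 0 ≤ v t) → v 1 = 0 →
        (∀ t : ℕ, 1 ≤ t →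
          (t : ℝ) * v (t + 1) ≤ ((t : ℝ) - 1) * v t + (δΦ + 1) * (A * Real.sqrt (v t) + B) / lam) →
        ∀ t : ℕ, 1 ≤ t → v t ≤ P := by
  intro P
  set c := δΦ + 1
  set s := √(c ^ 2 * A ^ 2 + 4 * B * lam * c)
  set u := (c * A + s) / (2 * lam)
  have hs : discrim lam (-(c * A)) (-(c * B)) = s * s := by
    rw [discrim, Real.mul_self_sqrt (by positivity)]; ring
  have hu : 0 ≤ u := by
    have : 0 ≤ c * A + s := by
      simpa only [mul_pow] using add_sqrt_sq_add_nonneg (c * A) (by positivity)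
    positivity
  have hP : P = u ^ 2 := by ring
  have hsqrtP : √P = u := by rw [hP, Real.sqrt_sq hu]
  have hroot : lam * (u * u) + -(c * A) * u + -(c * B) = 0 :=
    (quadratic_eq_zero_iff hlam.ne' hs u).2 (.inl (by ring))
  have hfix : c * (A * √P + B) / lam = P := by
    rw [hsqrtP, hP]; field_simp; linarith
  refine ⟨by rw [hsqrtP]; field_simp; linarith, fun v _ hv1 hrec => ?_⟩
  have hf : Monotone fun x => c * (A * √x + B) / lam := fun x y hxy => by dsimp only; gcongr
  exact le_of_le_average_step hf hfix.le (hv1 ▸ by positivity) hrec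
end
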